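/- Let T be an infinite Young tableau distributed according to the Plancherel measure of infinite order, and let q_n be the natural (lazy) parametrization of its jeu de taquin path, i.e. q_n = p_{K(n)} where K(n) is the maximal k with T_{p_k} ≤ n. Then for each n, q_n has the same distribution as d_n, the position of the box added at step n of the Plancherel growth process. -/

import Mathlib

open MeasureTheory

structure SYT (μ : YoungDiagram) where
  entry : ℕ → ℕ → ℕ
  mem_iff : ∀ i j, (i, j) ∈ μ ↔ 1 ≤ entry i j
  le_card : ∀ i j, entry i j ≤ μ.card
  injOn : ∀ i j i' j', (i, j) ∈ μ → (i', j') ∈ μ → entry i j = entry i' j' →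
    (i, j) = (i', j')
  row_lt : ∀ i j, (i, j + 1) ∈ μ → entry i j < entry i (j + 1)
  col_lt : ∀ i j, (i + 1, j) ∈ μ → entry i j < entry (i + 1) j

/-- The number of standard Young tableaux of shape `μ`. -/
noncomputable def fSYT (μ : YoungDiagram) : ℕ := Nat.card (SYT μ)

/-- `ν` is obtained from `μ` by adding a single box (`μ ↗ ν`). -/
def YDcovers (μ ν : YoungDiagram) : Prop := μ.cells ⊆ ν.cells ∧ ν.card = μ.card + 1

/-- One step of the jeu de taquin path: move to whichever of the lower/right
neighbours (cells are `(row, column)`) carries the smaller entry; an entry `0`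
represents an empty cell, treated as `+∞`. -/
def jdtStepF (t : ℕ → ℕ → ℕ) (c : ℕ × ℕ) : ℕ × ℕ :=
  if t (c.1 + 1) c.2 ≠ 0 ∧ (t c.1 (c.2 + 1) = 0 ∨ t (c.1 + 1) c.2 < t c.1 (c.2 + 1)) then
    (c.1 + 1, c.2)
  else (c.1, c.2 + 1)

/-- The jeu de taquin path, starting from the corner box. -/
def jdtPathF (t : ℕ → ℕ → ℕ) : ℕ → ℕ × ℕ := fun k => (jdtStepF t)^[k] (0, 0)

open scoped Classical in
/-- The jeu de taquin transformation. -/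
noncomputable def jdtF (t : ℕ → ℕ → ℕ) : ℕ → ℕ → ℕ := fun i j =>
  if ∃ k, jdtPathF t k = (i, j) then
    t (jdtStepF t (i, j)).1 (jdtStepF t (i, j)).2 - 1
  else t i j - 1

/-- `t` is an infinite Young tableau: every cell of the quadrant is filled, every
positive integer appears exactly once, and entries increase along rows and columns
(cells are `(row, column)`). -/
def IsInfYT (t : ℕ → ℕ → ℕ) : Prop :=
  (∀ i j, 1 ≤ t i j) ∧ (∀ n, 1 ≤ n → ∃! c : ℕ × ℕ, t c.1 c.2 = n) ∧
  (∀ i j, t i j < t i (j + 1)) ∧ (∀ i j, t i j < t (i + 1) j)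

/-- The cylinder event: the entries `1, …, n` of the infinite tableau form exactly the
standard Young tableau `s`. -/
def cylEvent (μ : YoungDiagram) (s : SYT μ) : Set (ℕ → ℕ → ℕ) :=
  { t | ∀ i j, (i, j) ∈ μ → t i j = s.entry i j }

/-- `P` is the Plancherel measure of infinite order: a probability measure concentrated
on infinite Young tableaux giving each cylinder event its Plancherel probability
`fSYT μ / (μ.card)!`.  (These properties characterise the Plancherel measure.) -/
def PlancherelLike (P : MeasureTheory.Measure (ℕ → ℕ → ℕ)) : Prop :=
  MeasureTheory.IsProbabilityMeasure P ∧ P { t | IsInfYT t } = 1 ∧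
  ∀ (μ : YoungDiagram) (s : SYT μ),
    P (cylEvent μ s) = ENNReal.ofReal ((fSYT μ : ℝ) / (Nat.factorial μ.card))

/-- The natural ("lazy") parametrization of the jeu de taquin path: the last box of the
jeu de taquin path whose entry is at most `n`. -/
noncomputable def qpos (t : ℕ → ℕ → ℕ) (n : ℕ) : ℕ × ℕ :=
  jdtPathF t (sSup { k | t (jdtPathF t k).1 (jdtPathF t k).2 ≤ n })

/-!
Restricted to the cylinder of a standard tableau `s` of shape `μ` with `|μ| = n`, the infinite
jeu de taquin path follows the path of `s` and leaves `μ` at the corner `s.jdtCorner` where that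
path ends, so `q_n` is this corner, while `T` has `n` at `c` iff `s` does. Since all cylinders of
shape `μ` have the same probability, it suffices that, for each `μ`, as many tableaux of shape `μ`
have their path end at `c` as have their largest entry at `c`. Promotion — slide the entry `1` out
along the path, lower the other entries by one and write `n` into the vacated corner — is such a
bijection: it is injective, because the path can be traced back from the corner (at each step
the predecessor is the neighbour whose promoted entry is larger).
-/

instance : Countable YoungDiagram :=
  Function.Injective.countable fun _ _ => YoungDiagram.ext

lemma Nat.prod_covBy_iff {x y : ℕ × ℕ} : x ⋖ y ↔ y = (x.1 + 1, x.2) ∨ y = (x.1, x.2 + 1) := by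
  obtain ⟨a, b⟩ := x
  obtain ⟨c, d⟩ := y
  simp only [Prod.mk_covBy_mk_iff, Nat.covBy_iff_add_one_eq, Prod.mk.injEq]
  omega

lemma Nat.prod_exists_covBy_of_ne_zero {y : ℕ × ℕ} (hy : y ≠ (0, 0)) : ∃ x, x ⋖ y := by
  obtain ⟨i, j⟩ := y
  rcases Nat.eq_zero_or_eq_succ_pred i with rfl | hi
  · exact ⟨(0, j - 1), Nat.prod_covBy_iff.2 (Or.inr (by grind))⟩
  · exact ⟨(i - 1, j), Nat.prod_covBy_iff.2 (Or.inl (by grind))⟩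

section JdtPath

variable (t : ℕ → ℕ → ℕ)

lemma jdtStepF_eq_or (x : ℕ × ℕ) :
    jdtStepF t x = (x.1 + 1, x.2) ∨ jdtStepF t x = (x.1, x.2 + 1) := by
  unfold jdtStepF; split <;> simp

lemma covBy_jdtStepF (x : ℕ × ℕ) : x ⋖ jdtStepF t x :=
  Nat.prod_covBy_iff.2 (jdtStepF_eq_or t x)

lemma jdtPathF_succ (k : ℕ) : jdtPathF t (k + 1) = jdtStepF t (jdtPathF t k) :=
  Function.iterate_succ_apply' _ _ _

lemma jdtPathF_fst_add_snd (k : ℕ) : (jdtPathF t k).1 + (jdtPathF t k).2 = k := by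
  induction k with
  | zero => rfl
  | succ k ih =>
    rw [jdtPathF_succ]
    rcases jdtStepF_eq_or t (jdtPathF t k) with h | h <;> rw [h] <;> omega

lemma eq_of_jdtPathF_eq {t' : ℕ → ℕ → ℕ} {k l : ℕ} (h : jdtPathF t k = jdtPathF t' l) :
    k = l := by
  rw [← jdtPathF_fst_add_snd t k, h, jdtPathF_fst_add_snd]

lemma jdtPathF_injective : Function.Injective (jdtPathF t) := fun _ _ => eq_of_jdtPathF_eq t

lemma jdtPathF_monotone : Monotone (jdtPathF t) :=
  monotone_nat_of_le_succ fun k => by rw [jdtPathF_succ]; exact (covBy_jdtStepF t _).le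

lemma jdtPathF_mem_of_le {μ : YoungDiagram} {k l : ℕ} (hkl : k ≤ l) (hl : jdtPathF t l ∈ μ) :
    jdtPathF t k ∈ μ :=
  μ.isLowerSet (jdtPathF_monotone t hkl) hl

open scoped Classical in
/-- The cell whose entry jeu de taquin moves to `x`: `jdtF t i j = t (jdtSlide t (i, j)) - 1`. -/
noncomputable def jdtSlide (x : ℕ × ℕ) : ℕ × ℕ :=
  if x ∈ Set.range (jdtPathF t) then jdtStepF t x else x

lemma jdtSlide_jdtPathF (k : ℕ) : jdtSlide t (jdtPathF t k) = jdtPathF t (k + 1) := by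
  rw [jdtSlide, if_pos ⟨k, rfl⟩, jdtPathF_succ]

lemma jdtSlide_of_notMem {x : ℕ × ℕ} (hx : x ∉ Set.range (jdtPathF t)) : jdtSlide t x = x :=
  if_neg hx

lemma le_jdtSlide (x : ℕ × ℕ) : x ≤ jdtSlide t x := by
  unfold jdtSlide; split
  exacts [(covBy_jdtStepF t x).le, le_rfl]

lemma jdtSlide_injective : Function.Injective (jdtSlide t) := by
  intro x y h
  by_cases hx : x ∈ Set.range (jdtPathF t) <;> by_cases hy : y ∈ Set.range (jdtPathF t)
  · obtain ⟨k, rfl⟩ := hx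
    obtain ⟨l, rfl⟩ := hy
    rw [jdtSlide_jdtPathF, jdtSlide_jdtPathF] at h
    rw [Nat.succ_injective (jdtPathF_injective t h)]
  · obtain ⟨k, rfl⟩ := hx
    rw [jdtSlide_jdtPathF, jdtSlide_of_notMem t hy] at h
    exact absurd ⟨k + 1, h⟩ hy
  · obtain ⟨l, rfl⟩ := hy
    rw [jdtSlide_jdtPathF, jdtSlide_of_notMem t hx] at h
    exact absurd ⟨l + 1, h.symm⟩ hx
  · rwa [jdtSlide_of_notMem t hx, jdtSlide_of_notMem t hy] at h

lemma jdtSlide_ne_zero (x : ℕ × ℕ) : jdtSlide t x ≠ (0, 0) := by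
  by_cases hx : x ∈ Set.range (jdtPathF t)
  · obtain ⟨k, rfl⟩ := hx
    rw [jdtSlide_jdtPathF]
    intro h
    exact k.succ_ne_zero (jdtPathF_injective t (h.trans rfl))
  · rw [jdtSlide_of_notMem t hx]
    rintro rfl
    exact hx ⟨0, rfl⟩

end JdtPath

namespace SYT

variable {μ : YoungDiagram} (s : SYT μ)

@[ext]
lemma ext {s₁ s₂ : SYT μ} (h : s₁.entry = s₂.entry) : s₁ = s₂ := by
  cases s₁; cases s₂; simp_all

lemma one_le_entry {x : ℕ × ℕ} (hx : x ∈ μ) : 1 ≤ s.entry x.1 x.2 := (s.mem_iff x.1 x.2).1 hx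

lemma entry_eq_zero {x : ℕ × ℕ} (hx : x ∉ μ) : s.entry x.1 x.2 = 0 := by
  by_contra h
  exact hx ((s.mem_iff x.1 x.2).2 (Nat.one_le_iff_ne_zero.2 h))

lemma eq_of_entry_eq {x y : ℕ × ℕ} (hx : x ∈ μ) (hy : y ∈ μ)
    (h : s.entry x.1 x.2 = s.entry y.1 y.2) : x = y :=
  s.injOn x.1 x.2 y.1 y.2 hx hy h

lemma entry_lt_of_covBy {x y : ℕ × ℕ} (hxy : x ⋖ y) (hy : y ∈ μ) :
    s.entry x.1 x.2 < s.entry y.1 y.2 := by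
  rcases Nat.prod_covBy_iff.1 hxy with rfl | rfl
  exacts [s.col_lt x.1 x.2 hy, s.row_lt x.1 x.2 hy]

lemma two_le_entry {y : ℕ × ℕ} (hy : y ∈ μ) (h0 : y ≠ (0, 0)) : 2 ≤ s.entry y.1 y.2 := by
  obtain ⟨x, hxy⟩ := Nat.prod_exists_covBy_of_ne_zero h0
  have := s.one_le_entry (μ.isLowerSet hxy.le hy)
  have := s.entry_lt_of_covBy hxy hy
  omega

lemma exists_entry_eq {m : ℕ} (h1 : 1 ≤ m) (hm : m ≤ μ.card) :
    ∃ x ∈ μ, s.entry x.1 x.2 = m := by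
  obtain ⟨x, hx, rfl⟩ := Finset.surj_on_of_inj_on_of_card_le (s := μ.cells)
    (t := Finset.Icc 1 μ.card) (fun x _ => s.entry x.1 x.2)
    (fun x hx => Finset.mem_Icc.2 ⟨s.one_le_entry hx, s.le_card x.1 x.2⟩)
    (fun x y hx hy h => s.eq_of_entry_eq hx hy h) (by simp) m (Finset.mem_Icc.2 ⟨h1, hm⟩)
  exact ⟨x, hx, rfl⟩

lemma entry_zero_zero (hμ : 0 < μ.card) : s.entry 0 0 = 1 := by
  obtain ⟨x, hx, hx1⟩ := s.exists_entry_eq le_rfl hμ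
  by_cases h0 : x = (0, 0)
  · subst h0; exact hx1
  · have := s.two_le_entry hx h0; omega

instance : Finite (SYT μ) :=
  Finite.of_injective
    (fun s (x : μ.cells) => (⟨s.entry x.1.1 x.1.2, Nat.lt_succ_of_le (s.le_card _ _)⟩ :
      Fin (μ.card + 1)))
    fun s₁ s₂ h => by
      ext i j
      by_cases hx : (i, j) ∈ μ
      · simpa using congrFun h ⟨(i, j), by simpa using hx⟩
      · rw [s₁.entry_eq_zero hx, s₂.entry_eq_zero hx]

noncomputable def jdtLength : ℕ := sSup {k | jdtPathF s.entry k ∈ μ}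

noncomputable def jdtCorner : ℕ × ℕ := jdtPathF s.entry s.jdtLength

lemma jdtStepF_mem_and_entry_le {x y : ℕ × ℕ} (hxy : x ⋖ y) (hy : y ∈ μ) :
    jdtStepF s.entry x ∈ μ ∧
      s.entry (jdtStepF s.entry x).1 (jdtStepF s.entry x).2 ≤ s.entry y.1 y.2 := by
  have hmem : ∀ z : ℕ × ℕ, s.entry z.1 z.2 ≠ 0 → z ∈ μ := fun z hz =>
    (s.mem_iff z.1 z.2).2 (Nat.one_le_iff_ne_zero.2 hz)
  have hy0 := s.one_le_entry hy
  unfold jdtStepF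
  rcases Nat.prod_covBy_iff.1 hxy with rfl | rfl <;> split_ifs with h <;> dsimp only at hy0 h ⊢
  · exact ⟨hy, le_rfl⟩
  · exact ⟨hmem (x.1, x.2 + 1) (by dsimp only; omega), by omega⟩
  · exact ⟨hmem _ h.1, by omega⟩
  · exact ⟨hy, le_rfl⟩

lemma jdtPathF_ne_jdtCorner {k : ℕ} (hk : k < s.jdtLength) :
    jdtPathF s.entry k ≠ s.jdtCorner :=
  fun h => hk.ne (jdtPathF_injective _ h)

/-- Promotion: the jeu de taquin transform `jdtF s.entry`, with `μ.card` in the vacated corner. -/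
noncomputable def promotionEntry (x : ℕ × ℕ) : ℕ :=
  if x = s.jdtCorner then μ.card else s.entry (jdtSlide s.entry x).1 (jdtSlide s.entry x).2 - 1

lemma promotionEntry_jdtCorner : s.promotionEntry s.jdtCorner = μ.card := if_pos rfl

lemma promotionEntry_of_ne {x : ℕ × ℕ} (hx : x ≠ s.jdtCorner) :
    s.promotionEntry x = s.entry (jdtSlide s.entry x).1 (jdtSlide s.entry x).2 - 1 :=
  if_neg hx

lemma promotionEntry_le_card (x : ℕ × ℕ) : s.promotionEntry x ≤ μ.card := by
  unfold promotionEntry; split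
  · rfl
  · have := s.le_card (jdtSlide s.entry x).1 (jdtSlide s.entry x).2; omega

section

variable {s} (hμ : 0 < μ.card)
include hμ

lemma jdtPathF_mem_iff {k : ℕ} : jdtPathF s.entry k ∈ μ ↔ k ≤ s.jdtLength := by
  have hbdd : BddAbove {k | jdtPathF s.entry k ∈ μ} :=
    (μ.cells.finite_toSet.preimage (jdtPathF_injective _).injOn).bddAbove
  have h0 : jdtPathF s.entry 0 ∈ μ := by
    obtain ⟨x, hx⟩ := Finset.card_pos.1 hμ
    exact μ.isLowerSet ⟨Nat.zero_le _, Nat.zero_le _⟩ hx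
  refine ⟨fun hk => le_csSup hbdd hk, fun hk => jdtPathF_mem_of_le _ hk ?_⟩
  exact Nat.sSup_mem ⟨0, h0⟩ hbdd

lemma jdtCorner_mem : s.jdtCorner ∈ μ := (jdtPathF_mem_iff hμ).2 le_rfl

lemma notMem_of_jdtCorner_covBy {y : ℕ × ℕ} (hy : s.jdtCorner ⋖ y) : y ∉ μ := fun hyμ => by
  have h := (jdtPathF_mem_iff hμ (s := s) (k := s.jdtLength + 1)).not.2 (by omega)
  rw [jdtPathF_succ] at h
  exact h (s.jdtStepF_mem_and_entry_le hy hyμ).1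

lemma jdtSlide_mem {x : ℕ × ℕ} (hx : x ∈ μ) (hxc : x ≠ s.jdtCorner) :
    jdtSlide s.entry x ∈ μ := by
  by_cases hp : x ∈ Set.range (jdtPathF s.entry)
  · obtain ⟨k, rfl⟩ := hp
    rw [jdtSlide_jdtPathF, jdtPathF_mem_iff hμ]
    have := (jdtPathF_mem_iff hμ).1 hx
    exact lt_of_le_of_ne this (fun h => hxc (by rw [h]; rfl))
  · rwa [jdtSlide_of_notMem _ hp]

lemma two_le_entry_jdtSlide {x : ℕ × ℕ} (hx : x ∈ μ) (hxc : x ≠ s.jdtCorner) :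
    2 ≤ s.entry (jdtSlide s.entry x).1 (jdtSlide s.entry x).2 :=
  s.two_le_entry (jdtSlide_mem hμ hx hxc) (jdtSlide_ne_zero _ x)

lemma entry_jdtSlide_lt_of_covBy {x y : ℕ × ℕ} (hxy : x ⋖ y) (hy : y ∈ μ)
    (hyc : y ≠ s.jdtCorner) :
    s.entry (jdtSlide s.entry x).1 (jdtSlide s.entry x).2
      < s.entry (jdtSlide s.entry y).1 (jdtSlide s.entry y).2 := by
  obtain ⟨hxμ, hle, heq⟩ : jdtSlide s.entry x ∈ μ ∧
      s.entry (jdtSlide s.entry x).1 (jdtSlide s.entry x).2 ≤ s.entry y.1 y.2 ∧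
      (jdtSlide s.entry x = y → y ∈ Set.range (jdtPathF s.entry)) := by
    by_cases hp : x ∈ Set.range (jdtPathF s.entry)
    · obtain ⟨k, rfl⟩ := hp
      rw [jdtSlide_jdtPathF, jdtPathF_succ]
      exact ⟨(s.jdtStepF_mem_and_entry_le hxy hy).1, (s.jdtStepF_mem_and_entry_le hxy hy).2,
        fun h => ⟨k + 1, by rw [jdtPathF_succ, h]⟩⟩
    · rw [jdtSlide_of_notMem _ hp]
      exact ⟨μ.isLowerSet hxy.le hy, (s.entry_lt_of_covBy hxy hy).le,
        fun h => absurd h hxy.lt.ne⟩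
  by_cases hp : y ∈ Set.range (jdtPathF s.entry)
  · obtain ⟨m, rfl⟩ := hp
    have hnext := jdtSlide_mem hμ hy hyc
    rw [jdtSlide_jdtPathF, jdtPathF_succ] at hnext ⊢
    exact hle.trans_lt (s.entry_lt_of_covBy (covBy_jdtStepF _ _) hnext)
  · rw [jdtSlide_of_notMem _ hp]
    exact hle.lt_of_ne fun h => hp (heq (s.eq_of_entry_eq hxμ hy h))

lemma promotionEntry_of_notMem {x : ℕ × ℕ} (hx : x ∉ μ) : s.promotionEntry x = 0 := by
  have hxc : x ≠ s.jdtCorner := fun h => hx (h ▸ jdtCorner_mem hμ)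
  rw [s.promotionEntry_of_ne hxc,
    s.entry_eq_zero fun h => hx (μ.isLowerSet (le_jdtSlide _ x) h)]

lemma one_le_promotionEntry {x : ℕ × ℕ} (hx : x ∈ μ) : 1 ≤ s.promotionEntry x := by
  by_cases hxc : x = s.jdtCorner
  · rw [hxc, promotionEntry_jdtCorner]; exact hμ
  · have := two_le_entry_jdtSlide hμ hx hxc
    rw [s.promotionEntry_of_ne hxc]; omega

lemma promotionEntry_lt_card {x : ℕ × ℕ} (hx : x ∈ μ) (hxc : x ≠ s.jdtCorner) :
    s.promotionEntry x < μ.card := by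
  have := two_le_entry_jdtSlide hμ hx hxc
  have := s.le_card (jdtSlide s.entry x).1 (jdtSlide s.entry x).2
  rw [s.promotionEntry_of_ne hxc]; omega

lemma promotionEntry_eq_card_iff {x : ℕ × ℕ} :
    s.promotionEntry x = μ.card ↔ x = s.jdtCorner := by
  refine ⟨fun h => by_contra fun hxc => ?_, fun h => h ▸ s.promotionEntry_jdtCorner⟩
  by_cases hx : x ∈ μ
  · exact (promotionEntry_lt_card hμ hx hxc).ne h
  · rw [promotionEntry_of_notMem hμ hx] at h; omega

lemma promotionEntry_injOn {x y : ℕ × ℕ} (hx : x ∈ μ) (hy : y ∈ μ)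
    (h : s.promotionEntry x = s.promotionEntry y) : x = y := by
  by_cases hxc : x = s.jdtCorner
  · rw [hxc, promotionEntry_jdtCorner, eq_comm, promotionEntry_eq_card_iff hμ] at h
    rw [hxc, h]
  by_cases hyc : y = s.jdtCorner
  · rw [hyc, promotionEntry_jdtCorner, promotionEntry_eq_card_iff hμ] at h
    exact absurd h hxc
  have := two_le_entry_jdtSlide hμ hx hxc
  have := two_le_entry_jdtSlide hμ hy hyc
  rw [s.promotionEntry_of_ne hxc, s.promotionEntry_of_ne hyc] at h
  exact jdtSlide_injective _
    (s.eq_of_entry_eq (jdtSlide_mem hμ hx hxc) (jdtSlide_mem hμ hy hyc) (by omega))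

lemma promotionEntry_lt_of_covBy {x y : ℕ × ℕ} (hxy : x ⋖ y) (hy : y ∈ μ) :
    s.promotionEntry x < s.promotionEntry y := by
  have hx : x ∈ μ := μ.isLowerSet hxy.le hy
  have hxc : x ≠ s.jdtCorner := fun h => notMem_of_jdtCorner_covBy hμ (h ▸ hxy) hy
  by_cases hyc : y = s.jdtCorner
  · rw [hyc, promotionEntry_jdtCorner]; exact promotionEntry_lt_card hμ hx hxc
  · have := two_le_entry_jdtSlide hμ hx hxc
    have := entry_jdtSlide_lt_of_covBy hμ hxy hy hyc
    rw [s.promotionEntry_of_ne hxc, s.promotionEntry_of_ne hyc]; omega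

variable (s) in
noncomputable def promotion : SYT μ where
  entry i j := s.promotionEntry (i, j)
  mem_iff i j := ⟨one_le_promotionEntry hμ, fun h => by_contra fun hx => by
    rw [promotionEntry_of_notMem hμ hx] at h; omega⟩
  le_card i j := s.promotionEntry_le_card (i, j)
  injOn i j i' j' := promotionEntry_injOn hμ
  row_lt i j := promotionEntry_lt_of_covBy hμ (Nat.prod_covBy_iff.2 (Or.inr rfl))
  col_lt i j := promotionEntry_lt_of_covBy hμ (Nat.prod_covBy_iff.2 (Or.inl rfl))

end

section

variable {s₁ s₂ : SYT μ} (hμ : 0 < μ.card)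
  (h : s₁.promotionEntry = s₂.promotionEntry)
include hμ h

lemma jdtCorner_eq_of_promotionEntry_eq : s₁.jdtCorner = s₂.jdtCorner := by
  rw [← promotionEntry_eq_card_iff hμ, ← h, promotionEntry_jdtCorner]

lemma entry_jdtSlide_eq_of_promotionEntry_eq {x : ℕ × ℕ} (hx : x ∈ μ)
    (hxc : x ≠ s₁.jdtCorner) :
    s₁.entry (jdtSlide s₁.entry x).1 (jdtSlide s₁.entry x).2
      = s₂.entry (jdtSlide s₂.entry x).1 (jdtSlide s₂.entry x).2 := by
  have hxc₂ : x ≠ s₂.jdtCorner := jdtCorner_eq_of_promotionEntry_eq hμ h ▸ hxc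
  have he := congrFun h x
  have := two_le_entry_jdtSlide hμ hx hxc
  have := two_le_entry_jdtSlide hμ hx hxc₂
  rw [promotionEntry_of_ne _ hxc, promotionEntry_of_ne _ hxc₂] at he
  omega

lemma entry_lt_of_jdtPathF_ne {k : ℕ} (hk : k < s₁.jdtLength)
    (hne : jdtPathF s₂.entry k ≠ jdtPathF s₁.entry k) :
    s₁.entry (jdtPathF s₁.entry (k + 1)).1 (jdtPathF s₁.entry (k + 1)).2
      < s₂.entry (jdtPathF s₁.entry (k + 1)).1 (jdtPathF s₁.entry (k + 1)).2 := by
  have hslide₂ : jdtSlide s₂.entry (jdtPathF s₁.entry k) = jdtPathF s₁.entry k := by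
    refine jdtSlide_of_notMem _ fun ⟨m, hm⟩ => hne ?_
    rwa [eq_of_jdtPathF_eq _ hm] at hm
  have := entry_jdtSlide_eq_of_promotionEntry_eq hμ h ((jdtPathF_mem_iff hμ).2 hk.le)
    (jdtPathF_ne_jdtCorner s₁ hk)
  rw [jdtSlide_jdtPathF, hslide₂] at this
  rw [this, jdtPathF_succ]
  exact s₂.entry_lt_of_covBy (covBy_jdtStepF _ _)
    (by rw [← jdtPathF_succ, jdtPathF_mem_iff hμ]; exact hk)

lemma jdtPathF_eq_of_promotionEntry_eq {k : ℕ} (hk : k ≤ s₁.jdtLength) :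
    jdtPathF s₁.entry k = jdtPathF s₂.entry k := by
  have hc := jdtCorner_eq_of_promotionEntry_eq hμ h
  have hlen : s₁.jdtLength = s₂.jdtLength := eq_of_jdtPathF_eq _ hc
  induction hk using Nat.decreasingInduction with
  | self => exact hc.trans (congrArg _ hlen.symm)
  | of_succ k hk ih =>
    -- two different cells leading into the common cell at step `k + 1` would each force the
    -- entry there to be smaller in one tableau than in the other
    by_contra hne
    have h₁ := entry_lt_of_jdtPathF_ne hμ h hk (Ne.symm hne)
    have h₂ := entry_lt_of_jdtPathF_ne hμ h.symm (hlen ▸ hk) hne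
    rw [ih] at h₁
    omega

lemma exists_jdtSlide_eq_of_promotionEntry_eq {y : ℕ × ℕ} (hy : y ∈ μ) (h0 : y ≠ (0, 0)) :
    ∃ x ∈ μ, x ≠ s₁.jdtCorner ∧ jdtSlide s₁.entry x = y ∧ jdtSlide s₂.entry x = y := by
  by_cases hp : y ∈ Set.range (jdtPathF s₁.entry)
  · obtain ⟨m, rfl⟩ := hp
    obtain ⟨k, rfl⟩ := Nat.exists_eq_succ_of_ne_zero (n := m) fun hm => h0 (by rw [hm]; rfl)
    have hk := (jdtPathF_mem_iff hμ).1 hy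
    refine ⟨_, (jdtPathF_mem_iff hμ).2 (by omega), jdtPathF_ne_jdtCorner s₁ hk,
      jdtSlide_jdtPathF _ k, ?_⟩
    rw [jdtPathF_eq_of_promotionEntry_eq hμ h (by omega), jdtSlide_jdtPathF,
      jdtPathF_eq_of_promotionEntry_eq hμ h hk]
  · refine ⟨y, hy, fun hc => hp ⟨_, hc.symm⟩, jdtSlide_of_notMem _ hp,
      jdtSlide_of_notMem _ ?_⟩
    rintro ⟨m, rfl⟩
    have hm := (jdtPathF_mem_iff hμ).1 hy
    rw [← eq_of_jdtPathF_eq _ (jdtCorner_eq_of_promotionEntry_eq hμ h)] at hm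
    exact hp ⟨m, jdtPathF_eq_of_promotionEntry_eq hμ h hm⟩

end

lemma promotion_injective (hμ : 0 < μ.card) :
    Function.Injective fun s : SYT μ => s.promotion hμ := by
  intro s₁ s₂ hp
  have h : s₁.promotionEntry = s₂.promotionEntry :=
    funext fun x => congrFun (congrFun (congrArg SYT.entry hp) x.1) x.2
  ext i j
  by_cases hy : (i, j) ∈ μ
  · by_cases h0 : (i, j) = (0, 0)
    · obtain ⟨rfl, rfl⟩ := Prod.mk.inj h0
      rw [s₁.entry_zero_zero hμ, s₂.entry_zero_zero hμ]
    obtain ⟨x, hx, hxc, h₁, h₂⟩ := exists_jdtSlide_eq_of_promotionEntry_eq hμ h hy h0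
    have := entry_jdtSlide_eq_of_promotionEntry_eq hμ h hx hxc
    rwa [h₁, h₂] at this
  · rw [s₁.entry_eq_zero hy, s₂.entry_eq_zero hy]

noncomputable def jdtCornerEquiv (hμ : 0 < μ.card) (c : ℕ × ℕ) :
    {s : SYT μ // s.jdtCorner = c} ≃ {s : SYT μ // s.entry c.1 c.2 = μ.card} :=
  (Equiv.ofBijective _ (Finite.injective_iff_bijective.1 (promotion_injective hμ))).subtypeEquiv
    fun _ => eq_comm.trans (promotionEntry_eq_card_iff hμ).symm

end SYT

namespace IsInfYT

variable {t : ℕ → ℕ → ℕ} (ht : IsInfYT t)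
include ht

lemma injective : Function.Injective fun x : ℕ × ℕ => t x.1 x.2 := fun _ y h =>
  (ht.2.1 _ (ht.1 y.1 y.2)).unique h rfl

lemma monotone : Monotone fun x : ℕ × ℕ => t x.1 x.2 := fun x y hxy =>
  ((strictMono_nat_of_lt_succ fun j => ht.2.2.1 x.1 j).monotone hxy.2).trans
    ((strictMono_nat_of_lt_succ fun i => ht.2.2.2 i y.2).monotone hxy.1)

lemma exists_mem_cylEvent (n : ℕ) :
    ∃ (μ : YoungDiagram) (s : SYT μ), μ.card = n ∧ t ∈ cylEvent μ s := by
  classical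
  let μ : YoungDiagram :=
    { cells := (Finset.Icc 1 n).preimage _ ht.injective.injOn
      isLowerSet := fun x y hxy hy => by
        simp only [Finset.coe_preimage, Set.mem_preimage, Finset.coe_Icc, Set.mem_Icc] at hy ⊢
        exact ⟨ht.1 _ _, (ht.monotone hxy).trans hy.2⟩ }
  have hmem : ∀ i j, (i, j) ∈ μ ↔ t i j ≤ n := fun i j => by
    rw [← YoungDiagram.mem_cells, Finset.mem_preimage, Finset.mem_Icc]
    exact and_iff_right (ht.1 i j)
  have hcard : μ.card = n := by
    rw [YoungDiagram.card, Finset.card_preimage, Finset.filter_true_of_mem, Nat.card_Icc,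
      Nat.add_sub_cancel]
    exact fun m hm => (ht.2.1 m (Finset.mem_Icc.1 hm).1).exists
  refine ⟨μ, ⟨fun i j => if t i j ≤ n then t i j else 0, fun i j => ?_, fun i j => ?_,
    fun i j i' j' hx hx' h => ?_, fun i j hx => ?_, fun i j hx => ?_⟩, hcard, fun i j hx => ?_⟩
  · rw [hmem]; split_ifs with h <;> simp [h, ht.1 i j]
  · rw [hcard]; split_ifs <;> omega
  · rw [hmem] at hx hx'
    simp only [if_pos hx, if_pos hx'] at h
    exact ht.injective h
  · have := ht.2.2.1 i j
    rw [hmem] at hx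
    simp only [if_pos hx, if_pos (this.le.trans hx)]; exact this
  · have := ht.2.2.2 i j
    rw [hmem] at hx
    simp only [if_pos hx, if_pos (this.le.trans hx)]; exact this
  · simp only [if_pos ((hmem i j).1 hx)]

section

variable {μ : YoungDiagram} {s : SYT μ} {n : ℕ} (hcard : μ.card = n) (hcyl : t ∈ cylEvent μ s)
include hcard hcyl

lemma mem_iff_le_of_mem_cylEvent {x : ℕ × ℕ} : x ∈ μ ↔ t x.1 x.2 ≤ n := by
  refine ⟨fun hx => ?_, fun hx => ?_⟩
  · rw [hcyl _ _ hx, ← hcard]; exact s.le_card _ _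
  · obtain ⟨y, hy, hyx⟩ := s.exists_entry_eq (ht.1 x.1 x.2) (hcard ▸ hx)
    rw [← hcyl _ _ hy] at hyx
    exact ht.injective hyx ▸ hy

lemma jdtStepF_eq_of_mem_cylEvent {x : ℕ × ℕ} (hx : jdtStepF s.entry x ∈ μ) :
    jdtStepF t x = jdtStepF s.entry x := by
  -- outside `μ` the entries of `t` exceed `n`, so they compare like the empty cells of `s`
  have hcell : ∀ y : ℕ × ℕ, (s.entry y.1 y.2 = t y.1 y.2 ∧ t y.1 y.2 ≤ n) ∨
      (s.entry y.1 y.2 = 0 ∧ n < t y.1 y.2) := fun y => by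
    by_cases hy : y ∈ μ
    · exact .inl ⟨(hcyl _ _ hy).symm, (ht.mem_iff_le_of_mem_cylEvent hcard hcyl).1 hy⟩
    · exact .inr ⟨s.entry_eq_zero hy,
        not_le.1 ((ht.mem_iff_le_of_mem_cylEvent hcard hcyl).not.1 hy)⟩
  have hd := hcell (x.1 + 1, x.2)
  have hr := hcell (x.1, x.2 + 1)
  have := ht.1 (x.1 + 1) x.2
  have := ht.1 x.1 (x.2 + 1)
  have hdr : 1 ≤ s.entry (x.1 + 1) x.2 ∨ 1 ≤ s.entry x.1 (x.2 + 1) := by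
    rcases jdtStepF_eq_or s.entry x with h | h <;> rw [h] at hx
    exacts [.inl (s.one_le_entry hx), .inr (s.one_le_entry hx)]
  have key :
      (t (x.1 + 1) x.2 ≠ 0 ∧ (t x.1 (x.2 + 1) = 0 ∨ t (x.1 + 1) x.2 < t x.1 (x.2 + 1))) ↔
      (s.entry (x.1 + 1) x.2 ≠ 0 ∧
        (s.entry x.1 (x.2 + 1) = 0 ∨ s.entry (x.1 + 1) x.2 < s.entry x.1 (x.2 + 1))) := by
    dsimp only at hd hr
    omega
  simp only [jdtStepF, key]

lemma jdtPathF_eq_of_mem_cylEvent (hμ : 0 < μ.card) {k : ℕ} (hk : k ≤ s.jdtLength) :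
    jdtPathF t k = jdtPathF s.entry k := by
  induction k with
  | zero => rfl
  | succ k ih =>
    rw [jdtPathF_succ, jdtPathF_succ, ih (by omega)]
    exact ht.jdtStepF_eq_of_mem_cylEvent hcard hcyl
      (by rw [← jdtPathF_succ]; exact (SYT.jdtPathF_mem_iff hμ).2 hk)

lemma qpos_eq_jdtCorner (hμ : 0 < μ.card) : qpos t n = s.jdtCorner := by
  have hpath : ∀ {k}, k ≤ s.jdtLength → jdtPathF t k = jdtPathF s.entry k :=
    ht.jdtPathF_eq_of_mem_cylEvent hcard hcyl hμ
  have hlevel : {k | t (jdtPathF t k).1 (jdtPathF t k).2 ≤ n} = Set.Iic s.jdtLength := by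
    ext k
    simp only [Set.mem_ofPred_eq, Set.mem_Iic, ← ht.mem_iff_le_of_mem_cylEvent hcard hcyl]
    refine ⟨fun hk => not_lt.1 fun hlt => ?_,
      fun hk => hpath hk ▸ (SYT.jdtPathF_mem_iff hμ).2 hk⟩
    have hnext := jdtPathF_mem_of_le t (Nat.succ_le_of_lt hlt) hk
    rw [jdtPathF_succ, hpath le_rfl] at hnext
    exact SYT.notMem_of_jdtCorner_covBy hμ (covBy_jdtStepF t _) hnext
  rw [qpos, hlevel, csSup_Iic, hpath le_rfl]
  rfl

lemma eq_iff_entry_eq_of_mem_cylEvent (hn : 1 ≤ n) (c : ℕ × ℕ) :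
    t c.1 c.2 = n ↔ s.entry c.1 c.2 = n := by
  by_cases hc : c ∈ μ
  · rw [hcyl _ _ hc]
  · have := (ht.mem_iff_le_of_mem_cylEvent hcard hcyl).not.1 hc
    rw [s.entry_eq_zero hc]
    omega

lemma sigma_eq_of_mem_cylEvent {ν : YoungDiagram} {s' : SYT ν} (hcard' : ν.card = n)
    (hcyl' : t ∈ cylEvent ν s') : (⟨μ, s⟩ : Σ ν, SYT ν) = ⟨ν, s'⟩ := by
  obtain rfl : μ = ν := YoungDiagram.ext <| Finset.ext fun x =>
    (ht.mem_iff_le_of_mem_cylEvent hcard hcyl).trans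
      (ht.mem_iff_le_of_mem_cylEvent hcard' hcyl').symm
  congr
  ext i j
  by_cases hx : (i, j) ∈ μ
  · rw [← hcyl _ _ hx, hcyl' _ _ hx]
  · rw [s.entry_eq_zero hx, s'.entry_eq_zero hx]

end

end IsInfYT

lemma measurableSet_cylEvent (μ : YoungDiagram) (s : SYT μ) : MeasurableSet (cylEvent μ s) := by
  unfold cylEvent; measurability

lemma measurableSet_setOf_isInfYT : MeasurableSet {t : ℕ → ℕ → ℕ | IsInfYT t} := by
  simp only [IsInfYT, ExistsUnique]; measurability

lemma PlancherelLike.measure_eq_tsum {P : Measure (ℕ → ℕ → ℕ)} (hP : PlancherelLike P) (n : ℕ)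
    (E : Set (ℕ → ℕ → ℕ)) (Q : ∀ ν : YoungDiagram, SYT ν → Prop)
    (hE : ∀ t, IsInfYT t → ∀ (ν : YoungDiagram) (s : SYT ν), ν.card = n → t ∈ cylEvent ν s →
      (t ∈ E ↔ Q ν s)) :
    P E = ∑' p : Σ ν : {ν : YoungDiagram // ν.card = n}, {s : SYT ν // Q ν s},
      ENNReal.ofReal ((fSYT p.1 : ℝ) / n.factorial) := by
  obtain ⟨_, hI, hcyl⟩ := hP
  have hInull : P {t | IsInfYT t}ᶜ = 0 :=
    (prob_compl_eq_zero_iff measurableSet_setOf_isInfYT).2 hI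
  have hdecomp : E ∩ {t | IsInfYT t} =
      ⋃ p : Σ ν : {ν : YoungDiagram // ν.card = n}, {s : SYT ν // Q ν s},
        cylEvent p.1 p.2 ∩ {t | IsInfYT t} := by
    ext t
    simp only [Set.mem_inter_iff, Set.mem_iUnion]
    refine ⟨fun ⟨htE, ht⟩ => ?_,
      fun ⟨⟨⟨ν, hν⟩, s, hQ⟩, hts, ht⟩ => ⟨(hE t ht ν s hν hts).2 hQ, ht⟩⟩
    obtain ⟨ν, s, hν, hts⟩ := ht.exists_mem_cylEvent n
    exact ⟨⟨⟨ν, hν⟩, s, (hE t ht ν s hν hts).1 htE⟩, hts, ht⟩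
  rw [← measure_inter_conull hInull, hdecomp, measure_iUnion]
  · refine tsum_congr fun p => ?_
    rw [measure_inter_conull hInull, hcyl, p.1.2]
  · rintro ⟨⟨ν, hν⟩, s, _⟩ ⟨⟨ν', hν'⟩, s', _⟩ hne
    refine Set.disjoint_left.2 fun t ⟨hts, ht⟩ ⟨hts', _⟩ => hne ?_
    obtain ⟨rfl, h⟩ := Sigma.mk.inj_iff.1 (ht.sigma_eq_of_mem_cylEvent hν hts hν' hts')
    obtain rfl := eq_of_heq h
    rfl
  · exact fun p => (measurableSet_cylEvent _ _).inter measurableSet_setOf_isInfYT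

/-- Under the Plancherel measure, the position `q_n` of the naturally
parametrized jeu de taquin path has the same distribution as the position `d_n` of the
box added at step `n` of the Plancherel growth process (i.e. the cell containing the
entry `n`). -/
theorem qpos_distribution (P : Measure (ℕ → ℕ → ℕ)) (hP : PlancherelLike P)
    (n : ℕ) (hn : 1 ≤ n) (c : ℕ × ℕ) :
    P { t | qpos t n = c } = P { t | t c.1 c.2 = n } := by
  rw [hP.measure_eq_tsum n {t | qpos t n = c} (fun ν s => s.jdtCorner = c)
      fun t ht ν s hν hts => by rw [Set.mem_ofPred_eq, ht.qpos_eq_jdtCorner hν hts (hν ▸ hn)],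
    hP.measure_eq_tsum n {t | t c.1 c.2 = n} (fun ν s => s.entry c.1 c.2 = n)
      fun t ht ν s hν hts => ht.eq_iff_entry_eq_of_mem_cylEvent hν hts hn c]
  exact Equiv.tsum_eq (Equiv.sigmaCongrRight fun ν : {ν : YoungDiagram // ν.card = n} =>
    (SYT.jdtCornerEquiv (ν.2 ▸ hn) c).trans (Equiv.subtypeEquivRight fun s => by rw [ν.2]))
    fun p => ENNReal.ofReal ((fSYT p.1 : ℝ) / n.factorial)
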